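/- Suppose c : [0, 6/7] → ℝ is continuously differentiable, c(0) = 1, and c(t) = cos²(πt/4)·c(t/8) + sin²(πt/4)·c(t/8 + 3/4) for all t ∈ [0, 6/7]. Then c is identically 1 on [0, 6/7]. -/

import Mathlib

/-!
Differentiating the fixed-point equation expresses `c'` at `t` through the difference
`c (t/8 + 3/4) - c (t/8)`, weighted by `(π/4) sin (πt/2)`, and an average of `c'` at the two
preimages, weighted by `1/8`. By the mean value theorem the difference is at most `(3/4) M`, where
`M = max |c'|`, so `M ≤ (3π/16 + 1/8) M`. As `3π/16 + 1/8 < 1`, `M = 0`, hence `c` is constant,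
equal to `c 0 = 1`.
-/

open Real Set

theorem hasDerivWithinAt_transfer {c : ℝ → ℝ} {a b t : ℝ} {s : Set ℝ}
    (ha : HasDerivWithinAt c a s (t / 8)) (hb : HasDerivWithinAt c b s (t / 8 + 3 / 4))
    (hs₁ : MapsTo (· / 8) s s) (hs₂ : MapsTo (· / 8 + 3 / 4) s s) :
    HasDerivWithinAt
      (fun x => cos (π * x / 4) ^ 2 * c (x / 8) + sin (π * x / 4) ^ 2 * c (x / 8 + 3 / 4))
      (π / 4 * sin (π * t / 2) * (c (t / 8 + 3 / 4) - c (t / 8))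
        + (cos (π * t / 4) ^ 2 * a + sin (π * t / 4) ^ 2 * b) / 8) s t := by
  have hu : HasDerivAt (fun x => π * x / 4) (π / 4) t := by
    simpa using ((hasDerivAt_id t).const_mul π).div_const 4
  have hcos : HasDerivAt (fun x => cos (π * x / 4) ^ 2)
      (2 * cos (π * t / 4) ^ 1 * (-sin (π * t / 4) * (π / 4))) t :=
    ((hasDerivAt_cos _).comp t hu).pow 2
  have hsin : HasDerivAt (fun x => sin (π * x / 4) ^ 2)
      (2 * sin (π * t / 4) ^ 1 * (cos (π * t / 4) * (π / 4))) t :=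
    ((hasDerivAt_sin _).comp t hu).pow 2
  have h₁ : HasDerivWithinAt (fun x => c (x / 8)) (a * (1 / 8)) s t :=
    ha.comp t ((hasDerivWithinAt_id t s).div_const 8) hs₁
  have h₂ : HasDerivWithinAt (fun x => c (x / 8 + 3 / 4)) (b * (1 / 8)) s t :=
    hb.comp t (((hasDerivWithinAt_id t s).div_const 8).add_const _) hs₂
  refine ((hcos.hasDerivWithinAt.mul h₁).add (hsin.hasDerivWithinAt.mul h₂)).congr_deriv ?_
  rw [show π * t / 2 = 2 * (π * t / 4) by ring, sin_two_mul]
  ring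

theorem deriv_eq_of_transfer_fixed {c c' : ℝ → ℝ} {s : Set ℝ} (hs : UniqueDiffOn ℝ s)
    (hs₁ : MapsTo (· / 8) s s) (hs₂ : MapsTo (· / 8 + 3 / 4) s s)
    (hc : ∀ t ∈ s, HasDerivWithinAt c (c' t) s t)
    (hfix : ∀ t ∈ s, c t = cos (π * t / 4) ^ 2 * c (t / 8) + sin (π * t / 4) ^ 2 * c (t / 8 + 3 / 4))
    {t : ℝ} (ht : t ∈ s) :
    c' t = π / 4 * sin (π * t / 2) * (c (t / 8 + 3 / 4) - c (t / 8))
      + (cos (π * t / 4) ^ 2 * c' (t / 8) + sin (π * t / 4) ^ 2 * c' (t / 8 + 3 / 4)) / 8 :=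
  (hs t ht).eq_deriv s (hc t ht)
    ((hasDerivWithinAt_transfer (hc _ (hs₁ ht)) (hc _ (hs₂ ht)) hs₁ hs₂).congr_of_mem hfix ht)

theorem abs_transfer_deriv_le {w p q d u v M : ℝ} (hw : |w| ≤ 1) (hp : 0 ≤ p) (hq : 0 ≤ q)
    (hpq : p + q = 1) (hd : |d| ≤ 3 / 4 * M) (hu : |u| ≤ M) (hv : |v| ≤ M) :
    |π / 4 * w * d + (p * u + q * v) / 8| ≤ (3 * π / 16 + 1 / 8) * M := by
  have h₁ : |π / 4 * w * d| ≤ π / 4 * (3 / 4 * M) := by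
    rw [abs_mul, abs_mul, abs_of_pos (by positivity : 0 < π / 4), mul_assoc]
    refine mul_le_mul_of_nonneg_left ?_ (by positivity)
    simpa only [one_mul] using mul_le_mul hw hd (abs_nonneg _) zero_le_one
  have h₂ : |p * u + q * v| ≤ M :=
    calc |p * u + q * v| ≤ p * |u| + q * |v| := by
          simpa only [abs_mul, abs_of_nonneg hp, abs_of_nonneg hq] using abs_add_le (p * u) (q * v)
      _ ≤ p * M + q * M := by gcongr
      _ = M := by rw [← add_mul, hpq, one_mul]
  calc |π / 4 * w * d + (p * u + q * v) / 8|
      ≤ |π / 4 * w * d| + |p * u + q * v| / 8 := by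
        refine (abs_add_le _ _).trans_eq ?_
        rw [abs_div, abs_of_pos (by norm_num : (0 : ℝ) < 8)]
    _ ≤ π / 4 * (3 / 4 * M) + M / 8 := by gcongr
    _ = (3 * π / 16 + 1 / 8) * M := by ring

theorem stmt14 (c c' : ℝ → ℝ)
    (hc : ∀ t ∈ Set.Icc (0:ℝ) (6/7), HasDerivWithinAt c (c' t) (Set.Icc (0:ℝ) (6/7)) t)
    (hc' : ContinuousOn c' (Set.Icc (0:ℝ) (6/7)))
    (h0 : c 0 = 1)
    (hfix : ∀ t ∈ Set.Icc (0:ℝ) (6/7),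
      c t = Real.cos (π * t / 4) ^ 2 * c (t / 8)
        + Real.sin (π * t / 4) ^ 2 * c (t / 8 + 3/4)) :
    ∀ t ∈ Set.Icc (0:ℝ) (6/7), c t = 1 := by
  have hs₁ : MapsTo (· / 8) (Icc (0 : ℝ) (6 / 7)) (Icc 0 (6 / 7)) := fun t ht =>
    ⟨by linarith [ht.1], by linarith [ht.2]⟩
  have hs₂ : MapsTo (· / 8 + 3 / 4) (Icc (0 : ℝ) (6 / 7)) (Icc 0 (6 / 7)) := fun t ht =>
    ⟨by linarith [ht.1], by linarith [ht.2]⟩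
  obtain ⟨t₀, ht₀, hmax⟩ := isCompact_Icc.exists_isMaxOn (nonempty_Icc.2 (by norm_num)) hc'.abs
  have hbound : ∀ t ∈ Icc (0 : ℝ) (6 / 7), ‖c' t‖ ≤ |c' t₀| := fun t ht => hmax ht
  have hlip : ∀ x ∈ Icc (0 : ℝ) (6 / 7), ∀ y ∈ Icc (0 : ℝ) (6 / 7),
      |c y - c x| ≤ |c' t₀| * |y - x| := fun x hx y hy =>
    (convex_Icc 0 (6 / 7)).norm_image_sub_le_of_norm_hasDerivWithin_le hc hbound hx hy
  have hcontract : |c' t₀| ≤ (3 * π / 16 + 1 / 8) * |c' t₀| := by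
    have hd := hlip _ (hs₁ ht₀) _ (hs₂ ht₀)
    rw [show t₀ / 8 + 3 / 4 - t₀ / 8 = 3 / 4 by ring, abs_of_pos (by norm_num : (0 : ℝ) < 3 / 4),
      mul_comm] at hd
    conv_lhs => rw [deriv_eq_of_transfer_fixed (uniqueDiffOn_Icc (by norm_num)) hs₁ hs₂ hc hfix ht₀]
    exact abs_transfer_deriv_le (abs_sin_le_one _) (sq_nonneg _) (sq_nonneg _)
      (cos_sq_add_sin_sq _) hd (hbound _ (hs₁ ht₀)) (hbound _ (hs₂ ht₀))
  have hM : |c' t₀| = 0 := by nlinarith [pi_lt_d2, abs_nonneg (c' t₀)]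
  intro t ht
  have h := hlip 0 ⟨le_rfl, by norm_num⟩ t ht
  rw [hM, zero_mul, abs_nonpos_iff, sub_eq_zero] at h
  rw [h, h0]
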